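/- arXiv:2507.04170 — 3 statements merged into one kernel-verified Lean document; each statement's English description precedes it below -/
import Mathlib

section
/- Let C₁ and C₂ be distinct compact configurations with the same number n of cells. Then there exist cells m₁ ∈ C₁ \ C₂ and m₂ ∈ C₂ \ C₁ such that C₁′ = (C₁ ∪ {m₂}) \ {m₁} is compact, has n cells, and |C₁′ \ C₂| = |C₁ \ C₂| − 1. -/
/-
Order `ℕ³` coordinatewise, so that compact configurations are exactly the finite lower sets.
Take `m₁` maximal in `C₁ \ C₂` and `m₂` minimal in `C₂ \ C₁`. Everything strictly below `m₂`
lies in `C₂` and, by minimality, in `C₁`; nothing of `C₁` other than `m₁` lies above `m₁`, since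
such a cell would be in `C₂` (forcing `m₁ ∈ C₂`) or in `C₁ \ C₂` (contradicting maximality).
Hence swapping `m₁` for `m₂` keeps `C₁` a lower set, and it removes exactly one cell of `C₁ \ C₂`.
-/

abbrev Cell := ℕ × ℕ × ℕ

/-- `c` dominates `c'` if each coordinate of `c'` is at most the corresponding coordinate of `c`. -/
def Dominates (c c' : Cell) : Prop :=
  c'.1 ≤ c.1 ∧ c'.2.1 ≤ c.2.1 ∧ c'.2.2 ≤ c.2.2

/-- A module `m` of `C` is compact if every cell dominated by `m` is in `C`. -/
def CompactAt (C : Finset Cell) (m : Cell) : Prop :=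
  ∀ c, Dominates m c → c ∈ C

/-- A configuration is compact if all its modules are compact. -/
def IsCompactConfig (C : Finset Cell) : Prop :=
  ∀ m ∈ C, CompactAt C m

theorem isCompactConfig_iff_isLowerSet {C : Finset Cell} :
    IsCompactConfig C ↔ IsLowerSet (C : Set Cell) :=
  ⟨fun h _ _ hle hm => h _ hm _ hle, fun h _ hm _ hle => h hle hm⟩

namespace Finset

variable {α : Type*} [DecidableEq α]

theorem sdiff_nonempty_of_card_le_of_ne {s t : Finset α} (hcard : #t ≤ #s) (hne : s ≠ t) :
    (s \ t).Nonempty :=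
  sdiff_nonempty.mpr fun hst => hne (eq_of_subset_of_card_le hst hcard)

theorem card_erase_insert_of_mem_of_notMem {s : Finset α} {a b : α} (ha : a ∈ s) (hb : b ∉ s) :
    #((insert b s).erase a) = #s := by
  rw [card_erase_of_mem (mem_insert_of_mem ha), card_insert_of_notMem hb, Nat.add_sub_cancel]

theorem erase_insert_sdiff_of_mem {s t : Finset α} {a b : α} (hb : b ∈ t) :
    (insert b s).erase a \ t = (s \ t).erase a := by
  rw [erase_sdiff_comm, insert_sdiff_of_mem s hb]

theorem isLowerSet_erase_insert_of_maximal_of_minimal [PartialOrder α] {s t : Finset α}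
    (hs : IsLowerSet (s : Set α)) (ht : IsLowerSet (t : Set α)) {a b : α}
    (ha : Maximal (· ∈ s \ t) a) (hb : Minimal (· ∈ t \ s) b) :
    IsLowerSet (((insert b s).erase a : Finset α) : Set α) := by
  obtain ⟨haS, haT⟩ := mem_sdiff.mp ha.prop
  obtain ⟨hbT, hbS⟩ := mem_sdiff.mp hb.prop
  intro x y hyx hx
  rw [mem_coe, mem_erase, mem_insert] at hx ⊢
  obtain ⟨hxa, rfl | hxS⟩ := hx
  · refine ⟨?_, or_iff_not_imp_right.mpr fun hyS => ?_⟩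
    · rintro rfl
      exact haT (ht hyx hbT)
    · exact hb.eq_of_le (mem_sdiff.mpr ⟨ht hyx hbT, hyS⟩) hyx
  · refine ⟨?_, .inr (hs hyx hxS)⟩
    rintro rfl
    by_cases hxT : x ∈ t
    · exact haT (ht hyx hxT)
    · exact hxa (ha.eq_of_le (mem_sdiff.mpr ⟨hxS, hxT⟩) hyx).symm

end Finset

open Finset in
/-- One exchange step between two distinct equinumerous compact configurations. -/
theorem exchange_step (C₁ C₂ : Finset Cell) (n : ℕ)
    (h₁ : IsCompactConfig C₁) (h₂ : IsCompactConfig C₂)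
    (hcard₁ : C₁.card = n) (hcard₂ : C₂.card = n) (hne : C₁ ≠ C₂) :
    ∃ m₁ ∈ C₁ \ C₂, ∃ m₂ ∈ C₂ \ C₁,
      IsCompactConfig ((insert m₂ C₁).erase m₁) ∧
      ((insert m₂ C₁).erase m₁).card = n ∧
      (((insert m₂ C₁).erase m₁) \ C₂).card = (C₁ \ C₂).card - 1 := by
  obtain ⟨m₁, hm₁⟩ := exists_maximal (sdiff_nonempty_of_card_le_of_ne (by omega) hne)
  obtain ⟨m₂, hm₂⟩ := exists_minimal (sdiff_nonempty_of_card_le_of_ne (by omega) hne.symm)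
  have hm₁C₁ := (mem_sdiff.mp hm₁.prop).1
  obtain ⟨hm₂C₂, hm₂C₁⟩ := mem_sdiff.mp hm₂.prop
  refine ⟨m₁, hm₁.prop, m₂, hm₂.prop, ?_, ?_, ?_⟩
  · rw [isCompactConfig_iff_isLowerSet] at h₁ h₂ ⊢
    exact isLowerSet_erase_insert_of_maximal_of_minimal h₁ h₂ hm₁ hm₂
  · rw [card_erase_insert_of_mem_of_notMem hm₁C₁ hm₂C₁, hcard₁]
  · rw [erase_insert_sdiff_of_mem hm₂C₂, card_erase_of_mem hm₁.prop]
end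

section
/- Any two compact configurations with the same number n of cells can be transformed into each other by a sequence of at most n steps, each of which removes one cell and adds one cell while keeping the configuration compact at every intermediate stage. -/
/-- A step removes one cell and adds one cell, keeping the configuration compact
and of the same cardinality. -/
def Step (C C' : Finset Cell) : Prop :=
  IsCompactConfig C' ∧ C'.card = C.card ∧ (C \ C').card = 1 ∧ (C' \ C).card = 1

theorem exists_chain_cons {α : Type*} {r : α → α → Prop} {a b c : α} {k : ℕ} (hab : r a b)
    (hbc : ∃ f : ℕ → α, f 0 = b ∧ f k = c ∧ ∀ i < k, r (f i) (f (i + 1))) :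
    ∃ f : ℕ → α, f 0 = a ∧ f (k + 1) = c ∧ ∀ i < k + 1, r (f i) (f (i + 1)) := by
  obtain ⟨f, hf0, hfk, hf⟩ := hbc
  refine ⟨fun | 0 => a | i + 1 => f i, rfl, hfk, ?_⟩
  rintro (_ | i) hi
  · simpa [hf0] using hab
  · exact hf i (by omega)

section LowerSet

variable {α : Type*} [PartialOrder α]

theorem IsLowerSet.insert_of_Iio_subset {s : Set α} {a : α} (hs : IsLowerSet s)
    (ha : Set.Iio a ⊆ s) : IsLowerSet (insert a s) := by
  rintro b c hcb (rfl | hb)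
  · rcases hcb.eq_or_lt with rfl | hcb
    · exact Set.mem_insert _ _
    · exact Or.inr (ha hcb)
  · exact Or.inr (hs hcb hb)

variable [DecidableEq α]

theorem Finset.exists_swap_isLowerSet {s t : Finset α} (hs : IsLowerSet (s : Set α))
    (ht : IsLowerSet (t : Set α)) (hst : (s \ t).Nonempty) (hts : (t \ s).Nonempty) :
    ∃ a ∈ s \ t, ∃ b ∈ t \ s, IsLowerSet (↑(insert b (s.erase a)) : Set α) := by
  obtain ⟨a, ha⟩ := (s \ t).exists_maximal hst
  obtain ⟨b, hb⟩ := (t \ s).exists_minimal hts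
  have ha_max : ∀ c ∈ s, a ≤ c → c = a := fun c hc hac =>
    ha.eq_of_ge (mem_sdiff.2 ⟨hc, fun hct => (mem_sdiff.1 ha.prop).2 (ht hac hct)⟩) hac
  have hb_min : Set.Iio b ⊆ (s : Set α) \ {a} := by
    intro c hcb
    have hct : c ∈ t := ht hcb.le (mem_sdiff.1 hb.prop).1
    have hcs : c ∈ s := by
      by_contra hcs
      exact hcb.not_ge (hb.le_of_le (mem_sdiff.2 ⟨hct, hcs⟩) hcb.le)
    exact ⟨hcs, fun hca => (mem_sdiff.1 ha.prop).2 (hca ▸ hct)⟩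
  refine ⟨a, ha.prop, b, hb.prop, ?_⟩
  rw [coe_insert, coe_erase]
  exact (hs.erase ha_max).insert_of_Iio_subset hb_min

end LowerSet

section Swap

variable {α : Type*} [DecidableEq α] {s t : Finset α} {a b : α}

theorem Finset.card_insert_erase_of_notMem (ha : a ∈ s) (hb : b ∉ s) :
    (insert b (s.erase a)).card = s.card := by
  rw [card_insert_of_notMem (fun h => hb (mem_of_mem_erase h)), card_erase_add_one ha]

theorem Finset.sdiff_insert_erase (ha : a ∈ s) (hb : b ∉ s) : s \ insert b (s.erase a) = {a} := by
  ext; aesop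

theorem Finset.insert_erase_sdiff_self (hb : b ∉ s) : insert b (s.erase a) \ s = {b} := by
  ext; aesop

theorem Finset.insert_erase_sdiff_of_mem (hb : b ∈ t) :
    insert b (s.erase a) \ t = (s \ t).erase a := by
  ext; aesop

end Swap

theorem dominates_iff_le {c c' : Cell} : Dominates c c' ↔ c' ≤ c := by
  simp [Dominates, Prod.le_def]

theorem exists_step_sdiff_card_lt {C D : Finset Cell} (hC : IsCompactConfig C)
    (hD : IsCompactConfig D) (hcard : C.card = D.card) (hCD : C ≠ D) :
    ∃ C', Step C C' ∧ (C' \ D).card < (C \ D).card := by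
  rw [isCompactConfig_iff_isLowerSet] at hC hD
  have hsub : ∀ {s t : Finset Cell}, s.card = t.card → s ⊆ t → s = t := fun h hst =>
    Finset.eq_of_subset_of_card_le hst h.ge
  obtain ⟨a, ha, b, hb, hlower⟩ := Finset.exists_swap_isLowerSet hC hD
    (Finset.sdiff_nonempty.2 fun h => hCD (hsub hcard h))
    (Finset.sdiff_nonempty.2 fun h => hCD (hsub hcard.symm h).symm)
  rw [Finset.mem_sdiff] at ha hb
  refine ⟨insert b (C.erase a), ⟨isCompactConfig_iff_isLowerSet.2 hlower,
    Finset.card_insert_erase_of_notMem ha.1 hb.2, ?_, ?_⟩, ?_⟩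
  · rw [Finset.sdiff_insert_erase ha.1 hb.2, Finset.card_singleton]
  · rw [Finset.insert_erase_sdiff_self hb.2, Finset.card_singleton]
  · rw [Finset.insert_erase_sdiff_of_mem hb.1]
    exact Finset.card_erase_lt_of_mem (Finset.mem_sdiff.2 ha)

theorem exists_step_chain {C D : Finset Cell} (hC : IsCompactConfig C) (hD : IsCompactConfig D)
    (hcard : C.card = D.card) :
    ∃ k ≤ (C \ D).card, ∃ f : ℕ → Finset Cell,
      f 0 = C ∧ f k = D ∧ ∀ i < k, Step (f i) (f (i + 1)) := by
  induction hd : (C \ D).card using Nat.strong_induction_on generalizing C with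
  | _ d ih =>
    by_cases hCD : C = D
    · exact ⟨0, Nat.zero_le _, fun _ => C, rfl, hCD, by simp⟩
    obtain ⟨C', hstep, hlt⟩ := exists_step_sdiff_card_lt hC hD hcard hCD
    obtain ⟨k, hk, hchain⟩ := ih _ (hd ▸ hlt) hstep.1 (hstep.2.1.trans hcard) rfl
    exact ⟨k + 1, by omega, exists_chain_cons hstep hchain⟩

/-- Two equinumerous compact configurations are connected by at most n steps. -/
theorem compact_to_compact (C₁ C₂ : Finset Cell) (n : ℕ)
    (h₁ : IsCompactConfig C₁) (h₂ : IsCompactConfig C₂)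
    (hcard₁ : C₁.card = n) (hcard₂ : C₂.card = n) :
    ∃ k ≤ n, ∃ f : ℕ → Finset Cell,
      f 0 = C₁ ∧ f k = C₂ ∧ ∀ i < k, Step (f i) (f (i + 1)) := by
  obtain ⟨k, hk, hchain⟩ := exists_step_chain h₁ h₂ (hcard₁.trans hcard₂.symm)
  exact ⟨k, hk.trans (hcard₁ ▸ Finset.card_le_card Finset.sdiff_subset), hchain⟩
end

section
/- In a quasi-compact configuration C, every module m that is not compact has both cells m + (1,0,0) and m + (0,1,0) empty (not in C). -/
/-- Cell c is below c' if they share x- and y-coordinates and c has smaller z. -/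
def Below (c c' : Cell) : Prop :=
  c.1 = c'.1 ∧ c.2.1 = c'.2.1 ∧ c.2.2 < c'.2.2

/-- m is quasi-compact if every dominated cell not below m is occupied. -/
def QuasiCompactAt (C : Finset Cell) (m : Cell) : Prop :=
  ∀ c, Dominates m c → ¬ Below c m → c ∈ C

theorem Dominates.trans {a b c : Cell} (hab : Dominates a b) (hbc : Dominates b c) :
    Dominates a c :=
  ⟨hbc.1.trans hab.1, hbc.2.1.trans hab.2.1, hbc.2.2.trans hab.2.2⟩

theorem not_below_of_column_ne {c m m' : Cell} (hc : Below c m)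
    (hcol : m'.1 ≠ m.1 ∨ m'.2.1 ≠ m.2.1) : ¬ Below c m' := by
  rintro ⟨h1, h2, -⟩
  obtain ⟨e1, e2, -⟩ := hc
  omega

/-- The cells below `m`, the only ones quasi-compactness of `m` leaves open, lie outside the
column of `m'`, so quasi-compactness of `m'` supplies them. -/
theorem compactAt_of_quasiCompactAt_of_dominates {C : Finset Cell} {m m' : Cell}
    (hm : QuasiCompactAt C m) (hm' : QuasiCompactAt C m') (hdom : Dominates m' m)
    (hcol : m'.1 ≠ m.1 ∨ m'.2.1 ≠ m.2.1) : CompactAt C m := by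
  intro c hc
  by_cases hb : Below c m
  · exact hm' c (hdom.trans hc) (not_below_of_column_ne hb hcol)
  · exact hm c hc hb

/-- In a quasi-compact configuration, a non-compact module has both of the cells
at +x and +y empty. -/
theorem noncompact_free_sides (C : Finset Cell)
    (hqc : ∀ m ∈ C, QuasiCompactAt C m) (m : Cell) (hm : m ∈ C)
    (hnc : ¬ CompactAt C m) :
    (m.1 + 1, m.2.1, m.2.2) ∉ C ∧ (m.1, m.2.1 + 1, m.2.2) ∉ C := by
  constructor <;> intro hside <;> apply hnc
  · exact compactAt_of_quasiCompactAt_of_dominates (hqc m hm) (hqc _ hside)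
      ⟨Nat.le_succ _, le_rfl, le_rfl⟩ (.inl (Nat.succ_ne_self _))
  · exact compactAt_of_quasiCompactAt_of_dominates (hqc m hm) (hqc _ hside)
      ⟨le_rfl, Nat.le_succ _, le_rfl⟩ (.inr (Nat.succ_ne_self _))
end
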